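/- Let n be a positive integer and define λ(n) = lcm over primes p dividing n of (p-1). Let k = λ(n)/gcd(λ(n), n-1). For each prime p ∣ n let d_n(p) = (p-1)² if gcd(n-1,p-1)² > gcd(n-1,p²-1), and d_n(p) = p²-1 otherwise. Then k · ∏_{p ∣ n} max(gcd(n-1,p²-1), gcd(n-1,p-1)²) divides ∏_{p ∣ n} d_n(p). -/

import Mathlib

/-!
Write `m = n - 1`. The quotient `λ / gcd(λ, m)` divides every `y` with `λ ∣ m y`, and
each `p - 1` divides `m · (p - 1) / gcd(p - 1, m)`; hence `k ∣ ∏ₚ (p - 1) / gcd(p - 1, m)`.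
It remains to see that `d_n(p) = (p - 1) c`, with `c = p - 1` or `c = p + 1`, absorbs both
`(p - 1) / g` and the max-term, where `g = gcd(m, p - 1)`: the max-term divides `g c`, because
`g² ∣ g (p - 1)` and `gcd(m, (p - 1)(p + 1)) ∣ g (p + 1)`.
-/

theorem Nat.div_gcd_dvd_of_dvd_mul {x m y : ℕ} (hx : x ≠ 0) (h : x ∣ m * y) :
    x / Nat.gcd x m ∣ y := by
  have hg : 0 < Nat.gcd x m := Nat.gcd_pos_of_pos_left m (Nat.pos_of_ne_zero hx)
  refine (Nat.coprime_div_gcd_div_gcd hg).dvd_of_dvd_mul_left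
    (Nat.dvd_of_mul_dvd_mul_right hg ?_)
  rwa [mul_assoc, mul_comm y, ← mul_assoc, Nat.div_mul_cancel (Nat.gcd_dvd_left x m),
    Nat.div_mul_cancel (Nat.gcd_dvd_right x m)]

theorem Finset.lcm_div_gcd_dvd_prod_div_gcd {ι : Type*} (s : Finset ι) (f : ι → ℕ) (m : ℕ)
    (hf : ∀ i ∈ s, f i ≠ 0) :
    s.lcm f / Nat.gcd (s.lcm f) m ∣ ∏ i ∈ s, f i / Nat.gcd (f i) m := by
  refine Nat.div_gcd_dvd_of_dvd_mul (by simpa [Finset.lcm_eq_zero_iff] using hf) ?_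
  refine Finset.lcm_dvd_iff.mpr fun i hi => ?_
  calc f i ∣ m * (f i / Nat.gcd (f i) m) := by
        rw [← Nat.mul_div_assoc _ (Nat.gcd_dvd_left _ _), Nat.mul_comm m,
          Nat.mul_div_assoc _ (Nat.gcd_dvd_right _ _)]
        exact Nat.dvd_mul_right _ _
    _ ∣ m * ∏ i ∈ s, f i / Nat.gcd (f i) m := mul_dvd_mul_left m (Finset.dvd_prod_of_mem _ hi)

theorem Nat.mul_div_gcd_dvd_of_dvd_gcd_mul {a m q c : ℕ} (h : a ∣ Nat.gcd m q * c) :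
    a * (q / Nat.gcd m q) ∣ q * c := by
  calc a * (q / Nat.gcd m q) ∣ Nat.gcd m q * c * (q / Nat.gcd m q) := mul_dvd_mul_right h _
    _ = q * c := by rw [mul_right_comm, Nat.mul_div_cancel' (Nat.gcd_dvd_right m q)]

theorem max_gcd_mul_div_gcd_dvd (m p : ℕ) :
    max (Nat.gcd m (p ^ 2 - 1)) (Nat.gcd m (p - 1) ^ 2) * ((p - 1) / Nat.gcd m (p - 1)) ∣
      if Nat.gcd m (p - 1) ^ 2 > Nat.gcd m (p ^ 2 - 1) then (p - 1) ^ 2 else p ^ 2 - 1 := by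
  have hsq : p ^ 2 - 1 = (p - 1) * (p + 1) := by simpa [mul_comm] using Nat.sq_sub_sq p 1
  split_ifs with h
  · rw [max_eq_right h.le, sq (p - 1)]
    exact Nat.mul_div_gcd_dvd_of_dvd_gcd_mul
      (by rw [sq]; exact mul_dvd_mul_left _ (Nat.gcd_dvd_right _ _))
  · rw [max_eq_left (not_lt.mp h), hsq]
    exact Nat.mul_div_gcd_dvd_of_dvd_gcd_mul ((Nat.gcd_mul_right_dvd_mul_gcd _ _ _).trans
      (mul_dvd_mul_left _ (Nat.gcd_dvd_right _ _)))

theorem stmt_4_general (n : ℕ)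
    (lam : ℕ) (hlam : lam = n.primeFactors.lcm (fun p => p - 1))
    (k : ℕ) (hk : k = lam / Nat.gcd lam (n - 1))
    (d : ℕ → ℕ)
    (hd : ∀ p, d p = if Nat.gcd (n - 1) (p - 1) ^ 2 > Nat.gcd (n - 1) (p ^ 2 - 1)
        then (p - 1) ^ 2 else p ^ 2 - 1) :
    k * ∏ p ∈ n.primeFactors, max (Nat.gcd (n - 1) (p ^ 2 - 1)) (Nat.gcd (n - 1) (p - 1) ^ 2) ∣
      ∏ p ∈ n.primeFactors, d p := by
  have hk_dvd : k ∣ ∏ p ∈ n.primeFactors, (p - 1) / Nat.gcd (p - 1) (n - 1) := by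
    rw [hk, hlam]
    exact Finset.lcm_div_gcd_dvd_prod_div_gcd _ _ _ fun p hp =>
      Nat.sub_ne_zero_of_lt (Nat.prime_of_mem_primeFactors hp).one_lt
  refine (mul_dvd_mul_right hk_dvd _).trans ?_
  rw [← Finset.prod_mul_distrib]
  refine Finset.prod_dvd_prod_of_dvd _ _ fun p _ => ?_
  rw [hd, mul_comm, Nat.gcd_comm (p - 1)]
  exact max_gcd_mul_div_gcd_dvd _ _

theorem stmt_4 (n : ℕ) (hn : 1 < n)
    (lam : ℕ) (hlam : lam = n.primeFactors.lcm (fun p => p - 1))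
    (k : ℕ) (hk : k = lam / Nat.gcd lam (n - 1))
    (d : ℕ → ℕ)
    (hd : ∀ p, d p = if Nat.gcd (n - 1) (p - 1) ^ 2 > Nat.gcd (n - 1) (p ^ 2 - 1)
        then (p - 1) ^ 2 else p ^ 2 - 1) :
    k * ∏ p ∈ n.primeFactors, max (Nat.gcd (n - 1) (p ^ 2 - 1)) (Nat.gcd (n - 1) (p - 1) ^ 2) ∣
      ∏ p ∈ n.primeFactors, d p :=
  stmt_4_general n lam hlam k hk d hd
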